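/- arXiv:2105.14612 — 3 statements merged into one kernel-verified Lean document; each statement's English description precedes it below -/
import Mathlib

section
/- For distinct parameters ξ_α, ξ_β, ξ_γ and rates b_i, b_k with appropriate nonvanishing conditions, the 3×3 matrices satisfy the Yang–Baxter-type identity: [[S_{γβ}(k), T_{γβ}(k), 0],[0,-1,0],[0,0,S_{γβ}(i)]] · [[S_{γα}(i),0,0],[0,S_{γα}(k),T_{γα}(k)],[0,0,-1]] · [[S_{βα}(k),T_{βα}(k),0],[0,-1,0],[0,0,S_{βα}(i)]] = [[S_{βα}(i),0,0],[0,S_{βα}(k),T_{βα}(k)],[0,0,-1]] · [[S_{γα}(k),T_{γα}(k),0],[0,-1,0],[0,0,S_{γα}(i)]] · [[S_{γβ}(i),0,0],[0,S_{γβ}(k),T_{γβ}(k)],[0,0,-1]]. -/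
noncomputable def S3 (b u v : ℂ) : ℂ := -(1 - b * u) / (1 - b * v)
noncomputable def T3 (b u v : ℂ) : ℂ := b * (u - v) / (1 - b * v)

/-!
Multiplying out, the two sides agree entry by entry as soon as `S` is a multiplicative cocycle
for each species, `S_{γβ} S_{βα} = -S_{γα}`, and the mixed three-term relation
`S_{βα}(i) T_{γα}(k) = S_{βα}(k) T_{γβ}(k) + S_{γα}(i) T_{βα}(k)` holds. After clearing
denominators the latter says that the three points `(1 - b_k ξ_λ, 1 - b_i ξ_λ)` are collinear,
which they are because both coordinates are affine in `ξ_λ`.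
-/

theorem S3_mul_S3 {b v : ℂ} (u w : ℂ) (hv : 1 - b * v ≠ 0) :
    S3 b u v * S3 b v w = -S3 b u w := by
  unfold S3
  rw [neg_div, neg_div, neg_mul_neg, div_mul_div_cancel₀ hv, neg_div, neg_neg]

theorem S3_mul_T3_eq_add {bi bk ξα ξβ : ℂ} (ξγ : ℂ) (hiα : 1 - bi * ξα ≠ 0)
    (hkα : 1 - bk * ξα ≠ 0) (hkβ : 1 - bk * ξβ ≠ 0) :
    S3 bi ξβ ξα * T3 bk ξγ ξα = S3 bk ξβ ξα * T3 bk ξγ ξβ + S3 bi ξγ ξα * T3 bk ξβ ξα := by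
  have hik := mul_ne_zero hiα hkα
  have hkk := mul_ne_zero hkα hkβ
  unfold S3 T3
  rw [div_mul_div_comm, div_mul_div_comm, div_mul_div_comm, div_add_div _ _ hkk hik,
    div_eq_div_iff hik (mul_ne_zero hkk hik)]
  ring

theorem Matrix.yangBaxter_fin_three {R : Type*} [CommRing R] {x y z p q r tx ty tz : R}
    (hy : x * z = -y) (hq : p * r = -q) (hmix : r * ty = z * tx + q * tz) :
    !![x, tx, 0; 0, -1, 0; 0, 0, p] *
    !![q, 0, 0; 0, y, ty; 0, 0, -1] *
    !![z, tz, 0; 0, -1, 0; 0, 0, r] =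
    !![r, 0, 0; 0, z, tz; 0, 0, -1] *
    !![y, ty, 0; 0, -1, 0; 0, 0, q] *
    !![p, 0, 0; 0, x, tx; 0, 0, -1] := by
  simp only [Matrix.mul_fin_three, EmbeddingLike.apply_eq_iff_eq, Matrix.vecCons_inj, mul_zero,
    zero_mul, add_zero, zero_add, mul_neg, neg_mul, mul_one, one_mul, neg_neg, neg_zero, and_true,
    true_and]
  refine ⟨⟨?_, ?_, by ring⟩, ⟨?_, ?_⟩, ?_⟩
  · linear_combination q * hy - y * hq
  · linear_combination -x * hmix - tx * hy
  · linear_combination hy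
  · linear_combination -hmix
  · linear_combination -hq

theorem stmt_3_general (bi bk ξα ξβ ξγ : ℂ)
    (hiα : 1 - bi * ξα ≠ 0) (hiβ : 1 - bi * ξβ ≠ 0)
    (hkα : 1 - bk * ξα ≠ 0) (hkβ : 1 - bk * ξβ ≠ 0) :
    !![S3 bk ξγ ξβ, T3 bk ξγ ξβ, 0; 0, -1, 0; 0, 0, S3 bi ξγ ξβ] *
    !![S3 bi ξγ ξα, 0, 0; 0, S3 bk ξγ ξα, T3 bk ξγ ξα; 0, 0, -1] *
    !![S3 bk ξβ ξα, T3 bk ξβ ξα, 0; 0, -1, 0; 0, 0, S3 bi ξβ ξα] =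
    !![S3 bi ξβ ξα, 0, 0; 0, S3 bk ξβ ξα, T3 bk ξβ ξα; 0, 0, -1] *
    !![S3 bk ξγ ξα, T3 bk ξγ ξα, 0; 0, -1, 0; 0, 0, S3 bi ξγ ξα] *
    !![S3 bi ξγ ξβ, 0, 0; 0, S3 bk ξγ ξβ, T3 bk ξγ ξβ; 0, 0, -1] :=
  Matrix.yangBaxter_fin_three (S3_mul_S3 ξγ ξα hkβ) (S3_mul_S3 ξγ ξα hiβ)
    (S3_mul_T3_eq_add ξγ hiα hkα hkβ)

/-- Yang–Baxter-type identity for the 3×3 blocks (case i = j > k). -/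
theorem stmt_3 (bi bk ξα ξβ ξγ : ℂ)
    (hiα : 1 - bi * ξα ≠ 0) (hiβ : 1 - bi * ξβ ≠ 0) (hiγ : 1 - bi * ξγ ≠ 0)
    (hkα : 1 - bk * ξα ≠ 0) (hkβ : 1 - bk * ξβ ≠ 0) (hkγ : 1 - bk * ξγ ≠ 0) :
    !![S3 bk ξγ ξβ, T3 bk ξγ ξβ, 0; 0, -1, 0; 0, 0, S3 bi ξγ ξβ] *
    !![S3 bi ξγ ξα, 0, 0; 0, S3 bk ξγ ξα, T3 bk ξγ ξα; 0, 0, -1] *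
    !![S3 bk ξβ ξα, T3 bk ξβ ξα, 0; 0, -1, 0; 0, 0, S3 bi ξβ ξα] =
    !![S3 bi ξβ ξα, 0, 0; 0, S3 bk ξβ ξα, T3 bk ξβ ξα; 0, 0, -1] *
    !![S3 bk ξγ ξα, T3 bk ξγ ξα, 0; 0, -1, 0; 0, 0, S3 bi ξγ ξα] *
    !![S3 bi ξγ ξβ, 0, 0; 0, S3 bk ξγ ξβ, T3 bk ξγ ξβ; 0, 0, -1] :=
  stmt_3_general bi bk ξα ξβ ξγ hiα hiβ hkα hkβ
end

section
/- The N²×N² matrix R_{βα} defined by R_{ij,kl} = S_{βα}(i) if ij=kl with i≤j, -1 if ij=kl with i>j, T_{βα}(i) if ij=lk with i<j, and 0 otherwise, satisfies R_{βα} · R_{αβ} = I_{N²}. -/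
open Finset

/-- The N²×N² matrix R_{βα}: rows/columns indexed by pairs (i,j) ∈ {1,…,N}². -/
noncomputable def Rmat {N : ℕ} (b : Fin N → ℂ) (ξβ ξα : ℂ) :
    Matrix (Fin N × Fin N) (Fin N × Fin N) ℂ := fun p q =>
  if p = q then (if p.1 ≤ p.2 then -(1 - b p.1 * ξβ) / (1 - b p.1 * ξα) else -1)
  else if q = (p.2, p.1) ∧ p.1 < p.2 then b p.1 * (ξβ - ξα) / (1 - b p.1 * ξα)
  else 0

/-- R_{βα} · R_{αβ} = I_{N²}. -/
theorem stmt_5 {N : ℕ} (hN : 1 ≤ N) (b : Fin N → ℂ) (ξα ξβ : ℂ)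
    (hα : ∀ i, 1 - b i * ξα ≠ 0) (hβ : ∀ i, 1 - b i * ξβ ≠ 0) :
    Rmat b ξβ ξα * Rmat b ξα ξβ = 1 := by
  ext ⟨i, j⟩ ⟨k, l⟩
  rw [Matrix.mul_apply, Matrix.one_apply]
  have hrow : ∀ q, q ≠ (i, j) → q ≠ (j, i) → Rmat b ξβ ξα (i, j) q = 0 := by
    intro q h1 h2
    simp [Rmat, Ne.symm h1, h2]
  rcases lt_trichotomy i j with hij | hij | hij
  · -- i < j : row supported on {(i,j),(j,i)}
    have hsum : ∑ q, Rmat b ξβ ξα (i, j) q * Rmat b ξα ξβ q (k, l)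
        = ∑ q ∈ ({(i, j), (j, i)} : Finset (Fin N × Fin N)),
            Rmat b ξβ ξα (i, j) q * Rmat b ξα ξβ q (k, l) := by
      refine (Finset.sum_subset (Finset.subset_univ _) ?_).symm
      intro q _ hq
      simp only [Finset.mem_insert, Finset.mem_singleton, not_or] at hq
      rw [hrow q hq.1 hq.2, zero_mul]
    have hne : ((i, j) : Fin N × Fin N) ≠ (j, i) := by
      simp [Prod.ext_iff]; intro h; exact absurd h hij.ne
    rw [hsum, Finset.sum_pair hne]
    have hA : Rmat b ξβ ξα (i, j) (i, j) = -(1 - b i * ξβ) / (1 - b i * ξα) := by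
      simp [Rmat, hij.le]
    have hB : Rmat b ξβ ξα (i, j) (j, i) = b i * (ξβ - ξα) / (1 - b i * ξα) := by
      simp [Rmat, Ne.symm hne, hij, hij.ne, hij.ne']
    rw [hA, hB]
    by_cases hk : ((k, l) : Fin N × Fin N) = (i, j)
    · rw [hk]
      have h1 : Rmat b ξα ξβ (i, j) (i, j) = -(1 - b i * ξα) / (1 - b i * ξβ) := by
        simp [Rmat, hij.le]
      have h2 : Rmat b ξα ξβ (j, i) (i, j) = 0 := by
        simp [Rmat, hne, not_lt.mpr hij.le, hij.ne, hij.ne']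
      rw [h1, h2, mul_zero, add_zero, if_pos rfl,
        div_mul_div_comm, div_eq_one_iff_eq (mul_ne_zero (hα i) (hβ i))]
      ring
    · by_cases hl : ((k, l) : Fin N × Fin N) = (j, i)
      · rw [hl]
        have h1 : Rmat b ξα ξβ (i, j) (j, i) = b i * (ξα - ξβ) / (1 - b i * ξβ) := by
          simp [Rmat, Ne.symm hne, hij, hij.ne, hij.ne']
        have h2 : Rmat b ξα ξβ (j, i) (j, i) = -1 := by
          simp [Rmat, not_le.mpr hij]
        rw [h1, h2, if_neg hne, div_mul_div_comm, mul_neg_one,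
          ← sub_eq_add_neg, sub_eq_zero,
          div_eq_div_iff (mul_ne_zero (hα i) (hβ i)) (hα i)]
        ring
      · have h1 : Rmat b ξα ξβ (i, j) (k, l) = 0 := by
          simp only [Rmat]
          rw [if_neg (Ne.symm hk), if_neg (fun hc => hl hc.1)]
        have h2 : Rmat b ξα ξβ (j, i) (k, l) = 0 := by
          simp only [Rmat]
          rw [if_neg (fun hh => hl hh.symm), if_neg (fun hc => hk hc.1)]
        rw [h1, h2, mul_zero, mul_zero, add_zero,
          if_neg (fun h => hk h.symm)]
  · -- i = j
    subst hij
    rw [Finset.sum_eq_single (i, i)]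
    · by_cases hk : ((k, l) : Fin N × Fin N) = (i, i)
      · rw [hk]
        have h1 : Rmat b ξβ ξα (i, i) (i, i) = -(1 - b i * ξβ) / (1 - b i * ξα) := by
          simp [Rmat]
        have h2 : Rmat b ξα ξβ (i, i) (i, i) = -(1 - b i * ξα) / (1 - b i * ξβ) := by
          simp [Rmat]
        rw [h1, h2, if_pos rfl,
          div_mul_div_comm, div_eq_one_iff_eq (mul_ne_zero (hα i) (hβ i))]
        ring
      · have : Rmat b ξα ξβ (i, i) (k, l) = 0 := by
          simp only [Rmat]
          rw [if_neg (Ne.symm hk), if_neg (fun hc => hk hc.1)]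
        rw [this, mul_zero, if_neg (fun h => hk h.symm)]
    · intro q _ hq
      rw [hrow q hq hq, zero_mul]
    · intro h; exact absurd (Finset.mem_univ _) h
  · -- i > j : row is -1 on diagonal only
    rw [Finset.sum_eq_single (i, j)]
    · have hrr : Rmat b ξβ ξα (i, j) (i, j) = -1 := by
        simp [Rmat, not_le.mpr hij]
      rw [hrr]
      by_cases hk : ((k, l) : Fin N × Fin N) = (i, j)
      · rw [hk]
        have : Rmat b ξα ξβ (i, j) (i, j) = -1 := by
          simp [Rmat, not_le.mpr hij]
        rw [this, if_pos rfl]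
        ring
      · have : Rmat b ξα ξβ (i, j) (k, l) = 0 := by
          simp only [Rmat]
          rw [if_neg (Ne.symm hk), if_neg (fun hc => absurd hc.2 (not_lt.mpr hij.le))]
        rw [this, mul_zero, if_neg (fun h => hk h.symm)]
    · intro q hqu hq
      by_cases hq2 : q = (j, i)
      · subst hq2
        have : Rmat b ξβ ξα (i, j) (j, i) = 0 := by
          simp only [Rmat]
          rw [if_neg (fun hh => hij.ne' (congrArg Prod.fst hh)),
            if_neg (fun hc => absurd hc.2 (not_lt.mpr hij.le))]
        rw [this, zero_mul]
      · rw [hrow q hq hq2, zero_mul]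
    · intro h; exact absurd (Finset.mem_univ _) h
end

section
/- Let E be the diagonal N^N × N^N matrix with (π,π)-entry ε_{ππ} = Σ_i 1/ξ_i - Σ_i b_{π(i)}. Then for any invertible constant matrix A and any permutation σ ∈ S_N, the matrix function U(x) = D(x) A ∏_i ξ_{σ(i)}^{x_i} satisfies E·U(x) = Σ_j r_j U(x - e_j) - (Σ_j r_j) U(x) for all x ∈ ℤ^N; conversely, if U of this form satisfies this equation with some diagonal E, then E's entries are given by ε_{ππ} above. -/
open Finset

/-- D(x): diagonal N^N × N^N matrix with (π,π)-entry ∏_i b_{π(i)}^{x_i}. -/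
noncomputable def Dmat {N : ℕ} (b : Fin N → ℂ) (x : Fin N → ℤ) :
    Matrix (Fin N → Fin N) (Fin N → Fin N) ℂ :=
  Matrix.diagonal (fun π => ∏ i, b (π i) ^ (x i))

/-- U(x) = D(x) A ∏_i ξ_{σ(i)}^{x_i}. -/
noncomputable def Umat {N : ℕ} (b ξ : Fin N → ℂ) (σ : Equiv.Perm (Fin N))
    (A : Matrix (Fin N → Fin N) (Fin N → Fin N) ℂ) (x : Fin N → ℤ) :
    Matrix (Fin N → Fin N) (Fin N → Fin N) ℂ :=
  (∏ i, ξ (σ i) ^ (x i)) • (Dmat b x * A)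

lemma prod_update_sub {N : ℕ} (f : Fin N → ℂ) (hf : ∀ i, f i ≠ 0) (x : Fin N → ℤ) (j : Fin N) :
    ∏ i, f i ^ (Function.update x j (x j - 1) i) = (∏ i, f i ^ (x i)) * (f j)⁻¹ := by
  have h : (fun i => f i ^ (Function.update x j (x j - 1) i)) =
      Function.update (fun i => f i ^ (x i)) j (f j ^ (x j - 1)) := by
    funext i
    rcases eq_or_ne i j with rfl | h
    · simp
    · simp [Function.update_of_ne h]
  rw [h, Finset.prod_update_of_mem (Finset.mem_univ j), zpow_sub_one₀ (hf j),
      ← Finset.mul_prod_erase Finset.univ (fun i => f i ^ x i) (Finset.mem_univ j)]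
  rw [Finset.sdiff_singleton_eq_erase]; ring

lemma key {N : ℕ} (b ξ : Fin N → ℂ) (hb : ∀ i, b i ≠ 0) (hξ : ∀ i, ξ i ≠ 0)
    (σ : Equiv.Perm (Fin N)) (A : Matrix (Fin N → Fin N) (Fin N → Fin N) ℂ)
    (x : Fin N → ℤ) :
    (∑ j, Matrix.diagonal (fun π : Fin N → Fin N => b (π j)) *
        Umat b ξ σ A (Function.update x j (x j - 1))) -
      (∑ j, Matrix.diagonal (fun π : Fin N → Fin N => b (π j))) * Umat b ξ σ A x =
    Matrix.diagonal (fun π : Fin N → Fin N => (∑ i, (ξ i)⁻¹) - ∑ i, b (π i)) *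
      Umat b ξ σ A x := by
  ext π ρ
  simp only [Umat, Dmat, Matrix.sub_apply, Matrix.sum_apply, Matrix.mul_smul,
    Matrix.smul_apply, smul_eq_mul, Matrix.sum_mul, Matrix.diagonal_mul_diagonal,
    Matrix.diagonal_mul, ← Matrix.mul_assoc]
  simp only [prod_update_sub (fun i => ξ (σ i)) (fun i => hξ (σ i)) x,
             prod_update_sub (fun i => b (π i)) (fun i => hb (π i)) x]
  have e1 : ∑ j, ((∏ i, ξ (σ i) ^ x i) * (ξ (σ j))⁻¹) *
        ((b (π j) * ((∏ i, b (π i) ^ x i) * (b (π j))⁻¹)) * A π ρ)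
      = (∑ i, (ξ i)⁻¹) * ((∏ i, ξ (σ i) ^ x i) * ((∏ i, b (π i) ^ x i) * A π ρ)) := by
    have h : ∀ j : Fin N, ((∏ i, ξ (σ i) ^ x i) * (ξ (σ j))⁻¹) *
        ((b (π j) * ((∏ i, b (π i) ^ x i) * (b (π j))⁻¹)) * A π ρ)
        = (ξ (σ j))⁻¹ * ((∏ i, ξ (σ i) ^ x i) * ((∏ i, b (π i) ^ x i) * A π ρ)) := by
      intro j
      have hbj := hb (π j)
      field_simp
    rw [Finset.sum_congr rfl fun j _ => h j, ← Finset.sum_mul,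
        Equiv.sum_comp σ fun i => (ξ i)⁻¹]
  rw [e1, ← Finset.sum_mul, ← Finset.sum_mul]
  ring

/-- E·U(x) = Σ_j r_j U(x-e_j) - (Σ_j r_j) U(x) holds for all x ∈ ℤ^N iff the diagonal entries
of E are ε_{ππ} = Σ_i 1/ξ_i - Σ_i b_{π(i)}. -/
theorem stmt_18 {N : ℕ} (hN : 1 ≤ N) (b ξ : Fin N → ℂ) (hb : ∀ i, b i ≠ 0)
    (hξ : ∀ i, ξ i ≠ 0) (σ : Equiv.Perm (Fin N))
    (A : Matrix (Fin N → Fin N) (Fin N → Fin N) ℂ) (hA : IsUnit A)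
    (e : (Fin N → Fin N) → ℂ) :
    (∀ x : Fin N → ℤ,
        Matrix.diagonal e * Umat b ξ σ A x =
          (∑ j, Matrix.diagonal (fun π : Fin N → Fin N => b (π j)) *
              Umat b ξ σ A (Function.update x j (x j - 1))) -
            (∑ j, Matrix.diagonal (fun π : Fin N → Fin N => b (π j))) * Umat b ξ σ A x) ↔
      e = fun π => (∑ i, (ξ i)⁻¹) - ∑ i, b (π i) := by
  constructor
  · intro h
    have h0 := h 0
    rw [key b ξ hb hξ σ A 0] at h0
    have hU : Umat b ξ σ A 0 = A := by
      simp [Umat, Dmat]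
    rw [hU] at h0
    have hd := hA.mul_right_cancel h0
    funext π
    have := congrFun (congrFun hd π) π
    simpa using this
  · intro he x
    rw [key b ξ hb hξ σ A x, he]
end
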